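/- arXiv:1710.11150 — 3 statements merged into one kernel-verified Lean document; each statement's English description precedes it below -/
import Mathlib

section
/- Fix an integer d ≥ 1 and λ > 0. Let K be an Exponential random variable with rate 1 and let W be an independent random variable whose distribution is the uniform mixture (1/d)·∑_{i=1}^d Gamma(i,λ). Then for every u with 0 < u < 1, the moment generating function of Z := K − W satisfies E[e^{uZ}] = (λ/(d·u·(1−u)))·[1 − (λ/(λ+u))^d]. -/
/-!
Independence factors the moment generating function: `E[e^{u(K - W)}] = M_K(u) · M_W(-u)`.
Tilting a Gamma density by `e^{tx}` gives another Gamma density, so `M_{Gamma(a,r)}(t) = (r/(r-t))^a`;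
thus `M_K(u) = 1/(1-u)`, and `M_W(-u)` is the average of `q^i` over `1 ≤ i ≤ d` with `q = λ/(λ+u)`,
a geometric sum equal to `(λ/(d u)) (1 - q^d)`.
-/

open MeasureTheory ProbabilityTheory Real Set
open scoped ENNReal NNReal

section Gamma

variable {a r : ℝ}

lemma gammaPDFReal_mul_exp_mul (hr : 0 ≤ r) {t : ℝ} (ht : t < r) (x : ℝ) :
    gammaPDFReal a r x * exp (t * x) = (r / (r - t)) ^ a * gammaPDFReal a (r - t) x := by
  have hrate : (r / (r - t)) ^ a * (r - t) ^ a = r ^ a := by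
    rw [div_rpow hr (sub_nonneg.2 ht.le), div_mul_cancel₀ _ (rpow_pos_of_pos (sub_pos.2 ht) a).ne']
  unfold gammaPDFReal
  split_ifs
  · rw [← hrate, show -((r - t) * x) = -(r * x) + t * x by ring, exp_add]
    ring
  · simp

lemma integral_gammaPDFReal (ha : 0 < a) (hr : 0 < r) : ∫ x, gammaPDFReal a r x = 1 := by
  rw [integral_eq_lintegral_of_nonneg_ae (ae_of_all _ (gammaPDFReal_nonneg ha hr))
    (measurable_gammaPDFReal a r).aestronglyMeasurable]
  change (∫⁻ x, gammaPDF a r x).toReal = 1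
  simp [ha, hr]

lemma integrable_gammaPDFReal (ha : 0 < a) (hr : 0 < r) : Integrable (gammaPDFReal a r) := by
  refine ⟨(measurable_gammaPDFReal a r).aestronglyMeasurable, ?_⟩
  rw [hasFiniteIntegral_iff_ofReal (ae_of_all _ (gammaPDFReal_nonneg ha hr))]
  change ∫⁻ x, gammaPDF a r x < ∞
  simp [ha, hr]

lemma measurable_gammaPDF : Measurable (gammaPDF a r) :=
  (measurable_gammaPDFReal a r).ennreal_ofReal

variable {E : Type*} [NormedAddCommGroup E] [NormedSpace ℝ E]

lemma toReal_gammaPDF (ha : 0 < a) (hr : 0 < r) (x : ℝ) :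
    (gammaPDF a r x).toReal = gammaPDFReal a r x :=
  ENNReal.toReal_ofReal (gammaPDFReal_nonneg ha hr x)

lemma integral_gammaMeasure (ha : 0 < a) (hr : 0 < r) (f : ℝ → E) :
    ∫ x, f x ∂gammaMeasure a r = ∫ x, gammaPDFReal a r x • f x := by
  rw [gammaMeasure, integral_withDensity_eq_integral_toReal_smul measurable_gammaPDF
    (ae_of_all _ fun _ ↦ ENNReal.ofReal_lt_top)]
  simp_rw [toReal_gammaPDF ha hr]

lemma integrable_gammaMeasure_iff (ha : 0 < a) (hr : 0 < r) {f : ℝ → E} :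
    Integrable f (gammaMeasure a r) ↔ Integrable (fun x ↦ gammaPDFReal a r x • f x) := by
  rw [gammaMeasure, integrable_withDensity_iff_integrable_smul' measurable_gammaPDF
    (ae_of_all _ fun _ ↦ ENNReal.ofReal_lt_top)]
  simp_rw [toReal_gammaPDF ha hr]

lemma integrable_exp_mul_gammaMeasure (ha : 0 < a) (hr : 0 < r) {t : ℝ} (ht : t < r) :
    Integrable (fun x ↦ exp (t * x)) (gammaMeasure a r) := by
  simp_rw [integrable_gammaMeasure_iff ha hr, smul_eq_mul, gammaPDFReal_mul_exp_mul hr.le ht]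
  exact (integrable_gammaPDFReal ha (sub_pos.2 ht)).const_mul _

lemma mgf_id_gammaMeasure (ha : 0 < a) (hr : 0 < r) {t : ℝ} (ht : t < r) :
    mgf id (gammaMeasure a r) t = (r / (r - t)) ^ a := by
  simp_rw [mgf, id, integral_gammaMeasure ha hr, smul_eq_mul, gammaPDFReal_mul_exp_mul hr.le ht,
    integral_const_mul, integral_gammaPDFReal ha (sub_pos.2 ht), mul_one]

end Gamma

lemma mgf_finset_sum_measure {Ω ι : Type*} {_ : MeasurableSpace Ω} {X : Ω → ℝ} {t : ℝ}
    {μ : ι → Measure Ω} {s : Finset ι} (hμ : ∀ i ∈ s, Integrable (fun ω ↦ exp (t * X ω)) (μ i)) :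
    mgf X (∑ i ∈ s, μ i) t = ∑ i ∈ s, mgf X (μ i) t := by
  simp_rw [mgf, integral_finsetSum_measure hμ]

lemma geom_sum_Icc_one_mul_one_sub {R : Type*} [CommRing R] (x : R) (d : ℕ) :
    (∑ i ∈ Finset.Icc 1 d, x ^ i) * (1 - x) = x * (1 - x ^ d) := by
  rw [← Finset.Ico_add_one_right_eq_Icc, ← neg_sub, mul_neg,
    geom_sum_Ico_mul x (Nat.le_add_left 1 d)]
  ring

lemma mgf_neg_id_gammaMixture {d : ℕ} {l u : ℝ} (hl : 0 < l) (hu : 0 < u) :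
    mgf id ((d : ℝ≥0∞)⁻¹ • ∑ i ∈ Finset.Icc 1 d, gammaMeasure (i : ℝ) l) (-u)
      = (d : ℝ)⁻¹ * (l / u * (1 - (l / (l + u)) ^ d)) := by
  have hshape : ∀ i ∈ Finset.Icc 1 d, (0 : ℝ) < i := fun i hi ↦
    Nat.cast_pos.2 (Finset.mem_Icc.1 hi).1
  have hneg : -u < l := by linarith
  rw [mgf_smul_measure, mgf_finset_sum_measure (X := id) fun i hi ↦
    integrable_exp_mul_gammaMeasure (hshape i hi) hl hneg, ENNReal.toReal_inv,
    ENNReal.toReal_natCast]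
  congr 1
  have hlu : l + u ≠ 0 := by positivity
  calc ∑ i ∈ Finset.Icc 1 d, mgf id (gammaMeasure i l) (-u)
      = ∑ i ∈ Finset.Icc 1 d, (l / (l + u)) ^ i :=
        Finset.sum_congr rfl fun i hi ↦ by
          rw [mgf_id_gammaMeasure (hshape i hi) hl hneg, sub_neg_eq_add, rpow_natCast]
    _ = (∑ i ∈ Finset.Icc 1 d, (l / (l + u)) ^ i) * (1 - l / (l + u)) * ((l + u) / u) := by
        field_simp
        ring
    _ = l / u * (1 - (l / (l + u)) ^ d) := by
        rw [geom_sum_Icc_one_mul_one_sub]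
        field_simp

theorem mgf_K_sub_W_general
    {Ω : Type*} [MeasureSpace Ω] [IsProbabilityMeasure (ℙ : Measure Ω)]
    (d : ℕ) (l : ℝ) (hl : 0 < l)
    (K W : Ω → ℝ) (hK : Measurable K) (hW : Measurable W)
    (hindep : IndepFun K W ℙ)
    (hKlaw : Measure.map K ℙ = expMeasure 1)
    (hWlaw : Measure.map W ℙ
      = (d : ℝ≥0∞)⁻¹ • (∑ i ∈ Finset.Icc 1 d, gammaMeasure (i : ℝ) l)) :
    ∀ u : ℝ, 0 < u → u < 1 →
      ∫ ω, Real.exp (u * (K ω - W ω)) ∂ℙ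
        = (l / (d * u * (1 - u))) * (1 - (l / (l + u)) ^ d) := by
  intro u hu hu1
  have hmgfK : mgf K ℙ u = 1 / (1 - u) := by
    rw [← mgf_id_map hK.aemeasurable, hKlaw, expMeasure,
      mgf_id_gammaMeasure one_pos one_pos hu1, rpow_one]
  have hmgfW : mgf W ℙ (-u) = (d : ℝ)⁻¹ * (l / u * (1 - (l / (l + u)) ^ d)) := by
    rw [← mgf_id_map hW.aemeasurable, hWlaw, mgf_neg_id_gammaMixture hl hu]
  calc ∫ ω, exp (u * (K ω - W ω)) ∂ℙ = mgf (K + -W) ℙ u := by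
        simp only [mgf, Pi.add_apply, Pi.neg_apply, sub_eq_add_neg]
    _ = mgf K ℙ u * mgf W ℙ (-u) := by
        rw [hindep.neg_right.mgf_add' hK.aestronglyMeasurable hW.neg.aestronglyMeasurable,
          mgf_neg]
    _ = (l / (d * u * (1 - u))) * (1 - (l / (l + u)) ^ d) := by
        rw [hmgfK, hmgfW]
        simp only [div_eq_mul_inv, mul_inv]
        ring

/-- If `K` is Exponential with rate 1 and `W`, independent of `K`, has the
uniform mixture distribution `(1/d)·∑_{i=1}^d Gamma(i,λ)`, then for `0 < u < 1` the moment
generating function of `Z := K − W` satisfies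
`E[e^{uZ}] = (λ/(d·u·(1−u)))·[1 − (λ/(λ+u))^d]`. -/
theorem mgf_K_sub_W
    {Ω : Type*} [MeasureSpace Ω] [IsProbabilityMeasure (ℙ : Measure Ω)]
    (d : ℕ) (hd : 1 ≤ d) (l : ℝ) (hl : 0 < l)
    (K W : Ω → ℝ) (hK : Measurable K) (hW : Measurable W)
    (hindep : IndepFun K W ℙ)
    (hKlaw : Measure.map K ℙ = expMeasure 1)
    (hWlaw : Measure.map W ℙ
      = (d : ℝ≥0∞)⁻¹ • (∑ i ∈ Finset.Icc 1 d, gammaMeasure (i : ℝ) l)) :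
    ∀ u : ℝ, 0 < u → u < 1 →
      ∫ ω, Real.exp (u * (K ω - W ω)) ∂ℙ
        = (l / (d * u * (1 - u))) * (1 - (l / (l + u)) ^ d) :=
  mgf_K_sub_W_general d l hl K W hK hW hindep hKlaw hWlaw
end

section
/- Fix an integer d ≥ 1 and define h_d : (0,∞) → ℝ by h_d(λ) := d − 2λ·[1 − (λ/(λ+1))^d]. Then there exists a unique λ > 0 such that h_d(λ) = 0. -/
/-! Substituting `t = λ/(λ+1)`, a bijection of `(0,∞)` onto `(0,1)`, the geometric sum gives
`λ·(1 − t^d) = t + t² + ⋯ + t^d`, so `h_d(λ) = 0` becomes `2(t + ⋯ + t^d) = d`. The left side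
is strictly increasing on `[0,1]` and runs from `0` to `2d`, so the intermediate value theorem
yields exactly one solution `t ∈ (0,1)`. -/

open Finset Set

section Field

variable {K : Type*} [Field K]

theorem mul_one_sub_div_add_one_pow (d : ℕ) {l : K} (hl : l + 1 ≠ 0) :
    l * (1 - (l / (l + 1)) ^ d) = ∑ k ∈ range d, (l / (l + 1)) ^ (k + 1) := by
  set t := l / (l + 1)
  have hlt : l * (1 - t) = t := by simp only [t]; field_simp; ring
  calc l * (1 - t ^ d) = l * (1 - t) * ∑ k ∈ range d, t ^ k := by
        rw [← geom_sum_mul_neg]; ring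
    _ = ∑ k ∈ range d, t ^ (k + 1) := by
        rw [hlt, mul_sum]; simp only [pow_succ']

theorem div_add_one_inj {a b : K} (ha : a + 1 ≠ 0) (hb : b + 1 ≠ 0) :
    a / (a + 1) = b / (b + 1) ↔ a = b := by
  rw [div_eq_div_iff ha hb]
  constructor <;> intro h <;> linear_combination h

theorem div_one_sub_div_div_one_sub_add_one {t : K} (ht : 1 - t ≠ 0) :
    t / (1 - t) / (t / (1 - t) + 1) = t := by
  field_simp
  ring

end Field

theorem strictMonoOn_sum_pow_succ {R : Type*} [Semiring R] [LinearOrder R] [IsStrictOrderedRing R]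
    {d : ℕ} (hd : d ≠ 0) : StrictMonoOn (fun t : R => ∑ k ∈ range d, t ^ (k + 1)) (Ici 0) :=
  fun _ ha _ _ hab => sum_lt_sum_of_nonempty (nonempty_range_iff.2 hd)
    fun k _ => pow_lt_pow_left₀ hab ha k.succ_ne_zero

theorem exists_two_mul_sum_pow_succ_eq {d : ℕ} (hd : d ≠ 0) :
    ∃ t ∈ Set.Ioo (0 : ℝ) 1, 2 * ∑ k ∈ range d, t ^ (k + 1) = d := by
  have hcont : ContinuousOn (fun t : ℝ => ∑ k ∈ range d, t ^ (k + 1)) (Icc 0 1) := by fun_prop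
  obtain ⟨t, ht, hval⟩ := intermediate_value_Ioo zero_le_one hcont
    (show (d : ℝ) / 2 ∈ Set.Ioo _ _ by simpa using Nat.pos_of_ne_zero hd)
  exact ⟨t, ht, by simp only at hval; linarith⟩

/-- For fixed `d ≥ 1`, the function
`h_d(λ) := d − 2λ·[1 − (λ/(λ+1))^d]` has a unique positive root. -/
theorem exists_unique_branch_root (d : ℕ) (hd : 1 ≤ d) :
    ∃! l : ℝ, 0 < l ∧ (d : ℝ) - 2 * l * (1 - (l / (l + 1)) ^ d) = 0 := by
  have hd0 : d ≠ 0 := by omega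
  have root_iff (l : ℝ) (hl : 0 < l) : (d : ℝ) - 2 * l * (1 - (l / (l + 1)) ^ d) = 0 ↔
      2 * ∑ k ∈ range d, (l / (l + 1)) ^ (k + 1) = d := by
    rw [mul_assoc, mul_one_sub_div_add_one_pow d (by positivity), sub_eq_zero, eq_comm]
  obtain ⟨t, ⟨ht0, ht1⟩, ht⟩ := exists_two_mul_sum_pow_succ_eq hd0
  have ht1' : 1 - t ≠ 0 := (sub_pos.2 ht1).ne'
  have hl : 0 < t / (1 - t) := by positivity
  refine ⟨t / (1 - t), ⟨hl, (root_iff _ hl).2 ?_⟩, fun l ⟨hl', hroot⟩ => ?_⟩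
  · rwa [div_one_sub_div_div_one_sub_add_one ht1']
  have hsame : l / (l + 1) = t :=
    (strictMonoOn_sum_pow_succ hd0).injOn (mem_Ici.2 (by positivity)) (mem_Ici.2 ht0.le)
      (by linarith [(root_iff l hl').1 hroot])
  rw [← div_one_sub_div_div_one_sub_add_one ht1'] at hsame
  exact (div_add_one_inj (by positivity) (by positivity)).1 hsame
end

section
/- For each integer d ≥ 1 define f_d(λ) := inf_{0 < u < 1} (λ/(u(1−u)))·[1 − (λ/(λ+u))^d], and let λ_c : ℕ → ℝ be a sequence such that for every d ≥ 1, λ_c(d) ∈ (0,1) and f_d(λ_c(d)) = 1. Then λ_c(d) → 1/4 as d → ∞. -/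
open Set Filter
open scoped Topology

/-!
Evaluating the infimum at `u = 1/2` gives `f_d(λ) ≤ 4λ`, so `λ_c(d) ≥ 1/4`. Conversely, for `d ≥ 3`
every `u` gives a value at least `min (6/5) (4λ(1 - (2/3)^d))`: for `u ≤ λ/2` Bernoulli's inequality
bounds `(λ/(λ+u))^d` by `λ/(λ+du)`, and for `u > λ/2` one has `λ/(λ+u) < 2/3` and `u(1-u) ≤ 1/4`.
Hence `4λ_c(d)(1 - (2/3)^d) ≤ 1`, and `λ_c(d)` is squeezed to `1/4`.
-/

/-- `f_d(λ) = inf_{0<u<1} (λ/(u(1-u)))·[1 − (λ/(λ+u))^d]`. -/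
noncomputable def f (d : ℕ) (l : ℝ) : ℝ :=
  ⨅ u : Set.Ioo (0 : ℝ) 1, (l / (u * (1 - (u : ℝ)))) * (1 - (l / (l + u)) ^ d)

noncomputable def objective (d : ℕ) (l u : ℝ) : ℝ :=
  l / (u * (1 - u)) * (1 - (l / (l + u)) ^ d)

variable {d : ℕ} {l u : ℝ}

lemma objective_nonneg (hl : 0 ≤ l) (hu0 : 0 < u) (hu1 : u < 1) : 0 ≤ objective d l u := by
  have hratio : l / (l + u) ≤ 1 := div_le_one_of_le₀ (by linarith) (by linarith)
  have hpow : (l / (l + u)) ^ d ≤ 1 := pow_le_one₀ (by positivity) hratio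
  have hden : 0 < u * (1 - u) := mul_pos hu0 (by linarith)
  exact mul_nonneg (by positivity) (by linarith)

lemma f_le_objective (hl : 0 ≤ l) (u : Ioo (0 : ℝ) 1) : f d l ≤ objective d l u :=
  ciInf_le ⟨0, by rintro _ ⟨v, rfl⟩; exact objective_nonneg hl v.2.1 v.2.2⟩ u

lemma le_f_of_forall_le {c : ℝ} (h : ∀ u ∈ Ioo (0 : ℝ) 1, c ≤ objective d l u) : c ≤ f d l :=
  have : Nonempty (Ioo (0 : ℝ) 1) := ⟨⟨1 / 2, by norm_num⟩⟩
  le_ciInf fun u => h u u.2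

lemma f_le_four_mul (hl : 0 ≤ l) : f d l ≤ 4 * l := by
  have hpow : 0 ≤ (l / (l + 1 / 2)) ^ d := by positivity
  calc f d l ≤ objective d l (1 / 2) := f_le_objective hl ⟨1 / 2, by norm_num⟩
    _ = 4 * l * (1 - (l / (l + 1 / 2)) ^ d) := by unfold objective; ring
    _ ≤ 4 * l := by nlinarith

lemma div_add_pow_le (hl : 0 < l) (hu : 0 ≤ u) (d : ℕ) :
    (l / (l + u)) ^ d ≤ l / (l + d * u) := by
  have hbernoulli : 1 + d * (u / l) ≤ (1 + u / l) ^ d :=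
    one_add_mul_le_pow (by linarith [div_nonneg hu hl.le]) d
  calc (l / (l + u)) ^ d = 1 / (1 + u / l) ^ d := by
        rw [← one_div_pow]; congr 1; field_simp
    _ ≤ 1 / (1 + d * (u / l)) := one_div_le_one_div_of_le (by positivity) hbernoulli
    _ = l / (l + d * u) := by field_simp

lemma six_fifths_le_objective (hd : 3 ≤ d) (hl : 0 < l) (hu0 : 0 < u) (hu1 : u < 1)
    (hul : u ≤ l / 2) : 6 / 5 ≤ objective d l u := by
  have hd' : (3 : ℝ) ≤ d := by exact_mod_cast hd
  have hldu : 0 < l + d * u := by positivity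
  have hden : 0 < u * (1 - u) := mul_pos hu0 (by linarith)
  calc (6 : ℝ) / 5 ≤ l * d / (l + d * u) := by
        rw [le_div_iff₀ hldu]; nlinarith [mul_le_mul_of_nonneg_left hul (by positivity : (0 : ℝ) ≤ d)]
    _ ≤ l / (u * (1 - u)) * (d * u / (l + d * u)) := by
        rw [div_mul_div_comm, div_le_div_iff₀ hldu (by positivity)]
        nlinarith [mul_pos (mul_pos hl hu0) (mul_pos hu0 hldu), (by positivity : (0 : ℝ) ≤ d)]
    _ ≤ objective d l u := by
        refine mul_le_mul_of_nonneg_left ?_ (by positivity)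
        have : d * u / (l + d * u) = 1 - l / (l + d * u) := by field_simp; ring
        linarith [div_add_pow_le hl hu0.le d]

lemma four_mul_le_objective (hl : 0 ≤ l) (hu1 : u < 1) (hul : l / 2 < u) :
    4 * l * (1 - (2 / 3 : ℝ) ^ d) ≤ objective d l u := by
  have hu0 : 0 < u := by linarith
  have hratio : l / (l + u) ≤ 2 / 3 := by rw [div_le_iff₀ (by linarith)]; linarith
  have hpow : (l / (l + u)) ^ d ≤ (2 / 3 : ℝ) ^ d := pow_le_pow_left₀ (by positivity) hratio d
  have hfour : 4 * l ≤ l / (u * (1 - u)) := by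
    rw [le_div_iff₀ (mul_pos hu0 (by linarith))]; nlinarith [sq_nonneg (u - 1 / 2)]
  have hpow_le_one : (2 / 3 : ℝ) ^ d ≤ 1 := pow_le_one₀ (by norm_num) (by norm_num)
  exact mul_le_mul hfour (by linarith) (by linarith) (by linarith)

lemma min_le_f (hd : 3 ≤ d) (hl : 0 < l) : min (6 / 5) (4 * l * (1 - (2 / 3 : ℝ) ^ d)) ≤ f d l := by
  refine le_f_of_forall_le fun u ⟨hu0, hu1⟩ => ?_
  rcases le_or_gt u (l / 2) with hul | hul
  · exact min_le_of_left_le (six_fifths_le_objective hd hl hu0 hu1 hul)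
  · exact min_le_of_right_le (four_mul_le_objective hl.le hu1 hul)

lemma le_one_div_of_f_eq_one (hd : 3 ≤ d) (hl : 0 < l) (hf : f d l = 1) :
    l ≤ 1 / (4 * (1 - (2 / 3 : ℝ) ^ d)) := by
  have hpow : (2 / 3 : ℝ) ^ d < 1 := pow_lt_one₀ (by norm_num) (by norm_num) (by omega)
  have hmin := min_le_f hd hl
  rw [hf, min_le_iff] at hmin
  rw [le_div_iff₀ (by linarith)]
  rcases hmin with h | h <;> linarith

/-- If `λ_c : ℕ → ℝ` satisfies `λ_c(d) ∈ (0,1)` and `f_d(λ_c(d)) = 1`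
for every `d ≥ 1`, then `λ_c(d) → 1/4` as `d → ∞`. -/
theorem critical_tendsto_one_fourth
    (lc : ℕ → ℝ)
    (hc : ∀ d : ℕ, 1 ≤ d → lc d ∈ Set.Ioo (0 : ℝ) 1 ∧ f d (lc d) = 1) :
    Tendsto lc atTop (𝓝 (1 / 4)) := by
  have hupper : Tendsto (fun d : ℕ => 1 / (4 * (1 - (2 / 3 : ℝ) ^ d))) atTop (𝓝 (1 / 4)) := by
    have hpow := tendsto_pow_atTop_nhds_zero_of_lt_one (by norm_num : (0 : ℝ) ≤ 2 / 3) (by norm_num)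
    simpa using ((hpow.const_sub 1).const_mul 4).inv₀ (by norm_num)
  refine tendsto_of_tendsto_of_tendsto_of_le_of_le' tendsto_const_nhds hupper ?_ ?_
  · filter_upwards [eventually_ge_atTop 1] with d hd
    obtain ⟨⟨hpos, -⟩, hf⟩ := hc d hd
    linarith [hf ▸ f_le_four_mul (d := d) hpos.le]
  · filter_upwards [eventually_ge_atTop 3] with d hd
    obtain ⟨⟨hpos, -⟩, hf⟩ := hc d (by omega)
    exact le_one_div_of_f_eq_one hd hpos hf
end
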